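/- Let g : ℝⁿ → ℝ be proper lsc convex, λ > 0, and D symmetric positive definite with eigenvalues in [1/m, m], m ≥ 1. Then the proximal mapping prox^D_{λg} is Lipschitz continuous with constant m²: ‖prox^D_{λg}(x) − prox^D_{λg}(y)‖ ≤ m²‖x − y‖ for all x, y ∈ ℝⁿ. -/

import Mathlib

/-!
Comparing the prox point `p x` with the points `p x + t • (w - p x)` of a segment, using convexity
of `g` and letting `t → 0⁺`, gives the variational inequality
`⟪x - p x, w - p x⟫_D ≤ λ (g w - g (p x))`. Adding it for `x` and `y` shows that the prox map is
firmly nonexpansive for the `D`-inner product, hence nonexpansive for the `D`-norm. The spectral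
bounds `‖z‖² / m ≤ ‖z‖²_D ≤ m ‖z‖²` turn this into `‖p x - p y‖ ≤ m ‖x - y‖ ≤ m² ‖x - y‖`.
-/

open Matrix Set Filter Topology

section Spectral
open scoped RealInnerProductSpace

variable {ι : Type*} [Fintype ι] [DecidableEq ι] {A : Matrix ι ι ℝ}

theorem Matrix.IsHermitian.dotProduct_mulVec_self_eq_sum (hA : A.IsHermitian)
    (z : EuclideanSpace ℝ ι) :
    z ⬝ᵥ A *ᵥ z = ∑ i, hA.eigenvalues i * ⟪hA.eigenvectorBasis i, z⟫ ^ 2 := by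
  set b := hA.eigenvectorBasis
  calc z ⬝ᵥ A *ᵥ z = ⟪z, toEuclideanLin A z⟫ := by
        simp [PiLp.inner_apply, dotProduct, mul_comm]
    _ = ∑ i, ⟪z, b i⟫ * ⟪b i, toEuclideanLin A z⟫ := (b.sum_inner_mul_inner _ _).symm
    _ = _ := by
        refine Finset.sum_congr rfl fun i _ => ?_
        rw [← isSymmetric_toEuclideanLin_iff.mpr hA, toLpLin_apply, hA.mulVec_eigenvectorBasis]
        simp [inner_smul_left, real_inner_comm]
        ring

theorem Matrix.IsHermitian.mul_norm_sq_le_dotProduct_mulVec (hA : A.IsHermitian) {a : ℝ}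
    (ha : ∀ i, a ≤ hA.eigenvalues i) (z : EuclideanSpace ℝ ι) :
    a * ‖z‖ ^ 2 ≤ z ⬝ᵥ A *ᵥ z := by
  rw [hA.dotProduct_mulVec_self_eq_sum, ← hA.eigenvectorBasis.sum_sq_inner_right, Finset.mul_sum]
  exact Finset.sum_le_sum fun i _ => mul_le_mul_of_nonneg_right (ha i) (sq_nonneg _)

theorem Matrix.IsHermitian.dotProduct_mulVec_le_mul_norm_sq (hA : A.IsHermitian) {b : ℝ}
    (hb : ∀ i, hA.eigenvalues i ≤ b) (z : EuclideanSpace ℝ ι) :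
    z ⬝ᵥ A *ᵥ z ≤ b * ‖z‖ ^ 2 := by
  rw [hA.dotProduct_mulVec_self_eq_sum, ← hA.eigenvectorBasis.sum_sq_inner_right, Finset.mul_sum]
  exact Finset.sum_le_sum fun i _ => mul_le_mul_of_nonneg_right (hb i) (sq_nonneg _)

end Spectral

namespace LinearMap.BilinForm

variable {E : Type*} [AddCommGroup E] [Module ℝ E] {B : LinearMap.BilinForm ℝ E} {g : E → ℝ}
  {x y z : E}

theorem two_mul_apply_le_sub_of_isMinOn (hg : ConvexOn ℝ univ g) (hB : B.IsSymm)
    (hz : IsMinOn (fun w ↦ g w + B (w - x) (w - x)) univ z) (w : E) :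
    2 * B (x - z) (w - z) ≤ g w - g z := by
  have key : ∀ t ∈ Ioc (0 : ℝ) 1,
      0 ≤ g w - g z - 2 * B (x - z) (w - z) + t * B (w - z) (w - z) := by
    rintro t ⟨ht0, ht1⟩
    have hconv : g (z + t • (w - z)) ≤ g z + t * (g w - g z) := by
      have := hg.2 (mem_univ z) (mem_univ w) (sub_nonneg.2 ht1) ht0.le (by ring)
      rw [smul_eq_mul, smul_eq_mul] at this
      rw [show z + t • (w - z) = (1 - t) • z + t • w by module]
      linarith
    have hmin := isMinOn_univ_iff.mp hz (z + t • (w - z))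
    rw [add_sub_right_comm] at hmin
    have hexp : B (z - x + t • (w - z)) (z - x + t • (w - z)) = B (z - x) (z - x)
        - 2 * t * B (x - z) (w - z) + t ^ 2 * B (w - z) (w - z) := by
      rw [← neg_sub x z]
      simp only [map_add, map_smul, map_neg, LinearMap.add_apply, LinearMap.smul_apply,
        LinearMap.neg_apply, smul_eq_mul, hB.eq (w - z) (x - z)]
      ring
    nlinarith
  have hlim : Tendsto (fun t : ℝ ↦ g w - g z - 2 * B (x - z) (w - z) + t * B (w - z) (w - z))
      (𝓝[>] 0) (𝓝 (g w - g z - 2 * B (x - z) (w - z))) :=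
    tendsto_nhdsWithin_of_tendsto_nhds ((by fun_prop : Continuous fun t : ℝ ↦
      g w - g z - 2 * B (x - z) (w - z) + t * B (w - z) (w - z)).tendsto' 0 _ (by simp))
  have := ge_of_tendsto hlim (mem_of_superset (Ioc_mem_nhdsGT one_pos) key)
  linarith

theorem apply_sub_self_le_of_isMinOn (hg : ConvexOn ℝ univ g) (hB : B.IsSymm) {p q : E}
    (hp : IsMinOn (fun w ↦ g w + B (w - x) (w - x)) univ p)
    (hq : IsMinOn (fun w ↦ g w + B (w - y) (w - y)) univ q) :
    B (p - q) (p - q) ≤ B (x - y) (p - q) := by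
  have hpq := two_mul_apply_le_sub_of_isMinOn hg hB hp q
  have hqp := two_mul_apply_le_sub_of_isMinOn hg hB hq p
  simp only [map_sub, LinearMap.sub_apply] at hpq hqp ⊢
  linarith

theorem IsPosSemidef.apply_self_le_of_apply_self_le_apply (hB : B.IsPosSemidef) {u v : E}
    (h : B u u ≤ B v u) : B u u ≤ B v v := by
  have := hB.isNonneg.nonneg (u - v)
  simp only [map_sub, LinearMap.sub_apply, hB.isSymm.eq u v] at this
  linarith

end LinearMap.BilinForm

section Euclidean

variable {ι : Type*} [Fintype ι] [DecidableEq ι]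

noncomputable def Matrix.toEuclideanBilin (A : Matrix ι ι ℝ) :
    LinearMap.BilinForm ℝ (EuclideanSpace ℝ ι) :=
  (toLinearMap₂' ℝ A).compl₁₂ (WithLp.linearEquiv 2 ℝ (ι → ℝ)).toLinearMap
    (WithLp.linearEquiv 2 ℝ (ι → ℝ)).toLinearMap

@[simp]
theorem Matrix.toEuclideanBilin_apply (A : Matrix ι ι ℝ) (u v : EuclideanSpace ℝ ι) :
    A.toEuclideanBilin u v = u ⬝ᵥ A *ᵥ v := by
  simp [toEuclideanBilin, toLinearMap₂'_apply']

theorem Matrix.PosSemidef.isPosSemidef_toEuclideanBilin {A : Matrix ι ι ℝ} (hA : A.PosSemidef) :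
    A.toEuclideanBilin.IsPosSemidef where
  eq u v := by
    have hT : Aᵀ = A := by rw [← conjTranspose_eq_transpose_of_trivial]; exact hA.1
    rw [toEuclideanBilin_apply, toEuclideanBilin_apply, dotProduct_mulVec, ← vecMul_transpose,
      hT, dotProduct_comm]
  nonneg u := by simpa using hA.dotProduct_mulVec_nonneg u

end Euclidean

theorem stmt_5 {n : ℕ} (m lam : ℝ) (hm : 1 ≤ m) (hlam : 0 < lam)
    (D : Matrix (Fin n) (Fin n) ℝ) (hD : D.PosDef)
    (heig : ∀ i, hD.1.eigenvalues i ∈ Set.Icc (1/m) m)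
    (g : EuclideanSpace ℝ (Fin n) → ℝ) (hg : ConvexOn ℝ Set.univ g)
    (p : EuclideanSpace ℝ (Fin n) → EuclideanSpace ℝ (Fin n))
    (hp : ∀ x w, g (p x) + ((p x - x) ⬝ᵥ D.mulVec (p x - x)) / (2*lam)
            ≤ g w + ((w - x) ⬝ᵥ D.mulVec (w - x)) / (2*lam)) :
    ∀ x y, ‖p x - p y‖ ≤ m^2 * ‖x - y‖ := by
  intro x y
  set B := (2 * lam)⁻¹ • D.toEuclideanBilin
  have hB : B.IsPosSemidef := hD.posSemidef.isPosSemidef_toEuclideanBilin.smul (by positivity)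
  have hmin : ∀ z, IsMinOn (fun w ↦ g w + B (w - z) (w - z)) univ (p z) := fun z ↦
    isMinOn_univ_iff.2 fun w ↦ by simpa [B, div_eq_inv_mul] using hp z w
  have hB_le : B (p x - p y) (p x - p y) ≤ B (x - y) (x - y) :=
    hB.apply_self_le_of_apply_self_le_apply
      (LinearMap.BilinForm.apply_sub_self_le_of_isMinOn hg hB.isSymm (hmin x) (hmin y))
  have hD_le :
      (p x - p y).ofLp ⬝ᵥ D *ᵥ (p x - p y).ofLp ≤ (x - y).ofLp ⬝ᵥ D *ᵥ (x - y).ofLp := by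
    simp only [B, LinearMap.smul_apply, smul_eq_mul, toEuclideanBilin_apply] at hB_le
    exact le_of_mul_le_mul_left hB_le (by positivity)
  have hm0 : 0 < m := by linarith
  have hlow := hD.1.mul_norm_sq_le_dotProduct_mulVec (fun i ↦ (heig i).1) (p x - p y)
  have hup := hD.1.dotProduct_mulVec_le_mul_norm_sq (fun i ↦ (heig i).2) (x - y)
  have hsq : ‖p x - p y‖ ^ 2 ≤ (m * ‖x - y‖) ^ 2 := by
    calc ‖p x - p y‖ ^ 2 = m * (1 / m * ‖p x - p y‖ ^ 2) := by field_simp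
      _ ≤ m * ((x - y).ofLp ⬝ᵥ D *ᵥ (x - y).ofLp) := by gcongr; exact hlow.trans hD_le
      _ ≤ m * (m * ‖x - y‖ ^ 2) := by gcongr
      _ = (m * ‖x - y‖) ^ 2 := by ring
  calc ‖p x - p y‖ ≤ m * ‖x - y‖ :=
        (pow_le_pow_iff_left₀ (norm_nonneg _) (by positivity) two_ne_zero).1 hsq
    _ ≤ m ^ 2 * ‖x - y‖ := by gcongr; nlinarith
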